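/- arXiv:2007.10920 — 4 statements merged into one kernel-verified Lean document; each statement's English description precedes it below -/
import Mathlib

section
/- The Schwarzschild conformal factor centered at c has the asymptotic expansion (1 + m/(2|x−c|))⁴ = 1 + 2m/|x| + 2m(c·x)/|x|³ + 3m²/(2|x|²) + O(|x|^{−3}) as |x| → ∞; that is, the difference of the two sides is bounded by a constant times |x|^{−3} for all large |x|. -/
/-!
Write `r = ‖x‖`, `s = ‖x - c‖` and `t = 1/s`. Expanding the fourth power, the conformal factor is a
polynomial in `t` whose linear and quadratic coefficients are `2m` and `3m²/2`. Since
`s² = r² - 2⟪c, x⟫ + ‖c‖²` and `|r - s| ≤ ‖c‖`, one has `t = 1/r + ⟪c, x⟫/r³ + O(r⁻³)` and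
`t² = 1/r² + O(r⁻³)`, while `t³, t⁴ = O(r⁻³)` because `s ≥ r/2` once `r ≥ 2‖c‖`.
-/

abbrev E3 := EuclideanSpace ℝ (Fin 3)

open RealInnerProductSpace

lemma one_add_div_two_mul_pow_four_sub (m s r u : ℝ) :
    (1 + m / (2 * s)) ^ 4 - (1 + 2 * m / r + 2 * m * u / r ^ 3 + 3 * m ^ 2 / (2 * r ^ 2)) =
      2 * m * (s⁻¹ - r⁻¹ - u / r ^ 3) + 3 / 2 * m ^ 2 * (s⁻¹ ^ 2 - r⁻¹ ^ 2) +
        m ^ 3 / 2 * s⁻¹ ^ 3 + m ^ 4 / 16 * s⁻¹ ^ 4 := by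
  ring

section InverseDistance

variable {E : Type*} [SeminormedAddCommGroup E] {x c : E}

lemma abs_norm_sub_norm_sub_le (x c : E) : |‖x‖ - ‖x - c‖| ≤ ‖c‖ := by
  simpa using abs_norm_sub_norm_le x (x - c)

lemma norm_le_two_mul_norm_sub (h : 2 * ‖c‖ < ‖x‖) : ‖x‖ ≤ 2 * ‖x - c‖ := by
  linarith [abs_le.mp (abs_norm_sub_norm_sub_le x c)]

lemma norm_sub_pos (h : 2 * ‖c‖ < ‖x‖) : 0 < ‖x - c‖ := by
  linarith [norm_le_two_mul_norm_sub h, norm_nonneg c]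

lemma inv_norm_sub_le (h : 2 * ‖c‖ < ‖x‖) : ‖x - c‖⁻¹ ≤ 2 / ‖x‖ := by
  have hx : 0 < ‖x‖ := by linarith [norm_nonneg c]
  rw [inv_le_comm₀ (norm_sub_pos h) (by positivity), inv_div]
  linarith [norm_le_two_mul_norm_sub h]

lemma abs_inv_norm_sub_sq_sub_inv_norm_sq_le (h : 2 * ‖c‖ < ‖x‖) :
    |‖x - c‖⁻¹ ^ 2 - ‖x‖⁻¹ ^ 2| ≤ 6 * ‖c‖ / ‖x‖ ^ 3 := by
  set r := ‖x‖
  set s := ‖x - c‖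
  have hs : 0 < s := norm_sub_pos h
  have hr : 0 < r := by linarith [norm_nonneg c]
  have hr2s : r ≤ 2 * s := norm_le_two_mul_norm_sub h
  have hdiff : s⁻¹ ^ 2 - r⁻¹ ^ 2 = (r - s) * (r + s) / (s ^ 2 * r ^ 2) := by
    field_simp
    ring
  calc |s⁻¹ ^ 2 - r⁻¹ ^ 2| = |r - s| * (r + s) / (s ^ 2 * r ^ 2) := by
        rw [hdiff, abs_div, abs_mul, abs_of_pos (by positivity : 0 < r + s),
          abs_of_pos (by positivity : 0 < s ^ 2 * r ^ 2)]
    _ ≤ ‖c‖ * (3 * s) / (s ^ 2 * r ^ 2) := by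
        gcongr
        · exact abs_norm_sub_norm_sub_le x c
        · linarith
    _ = 3 * ‖c‖ / r ^ 2 * s⁻¹ := by field_simp
    _ ≤ 3 * ‖c‖ / r ^ 2 * (2 / r) := by gcongr; exact inv_norm_sub_le h
    _ = 6 * ‖c‖ / r ^ 3 := by field_simp; ring

variable [InnerProductSpace ℝ E]

lemma abs_inv_norm_sub_sub_inv_norm_sub_inner_div_le (h : 2 * ‖c‖ < ‖x‖) :
    |‖x - c‖⁻¹ - ‖x‖⁻¹ - ⟪c, x⟫ / ‖x‖ ^ 3| ≤ 2 * ‖c‖ ^ 2 / ‖x‖ ^ 3 := by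
  set r := ‖x‖
  set s := ‖x - c‖
  set k := ‖c‖
  have hs : 0 < s := norm_sub_pos h
  have hr : 0 < r := by linarith [norm_nonneg c]
  have hrs : (r - s) ^ 2 ≤ k ^ 2 :=
    sq_le_sq.mpr ((abs_norm_sub_norm_sub_le x c).trans (le_abs_self k))
  have hr2s : r ≤ 2 * s := norm_le_two_mul_norm_sub h
  have hs2 : s ^ 2 = r ^ 2 - 2 * ⟪c, x⟫ + k ^ 2 := by
    rw [norm_sub_sq_real, real_inner_comm]
  -- eliminating `⟪c, x⟫` with `hs2` leaves a cubic in `r, s` vanishing to second order at `r = s`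
  have hnum : s⁻¹ - r⁻¹ - ⟪c, x⟫ / r ^ 3 =
      ((r - s) ^ 2 * (2 * r + s) - k ^ 2 * s) / (2 * s * r ^ 3) := by
    field_simp
    linear_combination (-s) * hs2
  have hcubic : |(r - s) ^ 2 * (2 * r + s) - k ^ 2 * s| ≤ 4 * k ^ 2 * s := by
    have : (r - s) ^ 2 * (2 * r + s) ≤ k ^ 2 * (5 * s) := by gcongr; linarith
    exact abs_le.mpr ⟨by nlinarith [sq_nonneg (r - s)], by linarith⟩
  calc |s⁻¹ - r⁻¹ - ⟪c, x⟫ / r ^ 3|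
      = |(r - s) ^ 2 * (2 * r + s) - k ^ 2 * s| / (2 * s * r ^ 3) := by
        rw [hnum, abs_div, abs_of_pos (by positivity : 0 < 2 * s * r ^ 3)]
    _ ≤ 4 * k ^ 2 * s / (2 * s * r ^ 3) := by gcongr
    _ = 2 * k ^ 2 / r ^ 3 := by field_simp; ring

lemma abs_conformal_factor_sub_expansion_le (m : ℝ) (h : 2 * ‖c‖ < ‖x‖) (hx : 1 ≤ ‖x‖) :
    |(1 + m / (2 * ‖x - c‖)) ^ 4 -
        (1 + 2 * m / ‖x‖ + 2 * m * ⟪c, x⟫ / ‖x‖ ^ 3 + 3 * m ^ 2 / (2 * ‖x‖ ^ 2))| ≤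
      (4 * |m| * ‖c‖ ^ 2 + 9 * m ^ 2 * ‖c‖ + 4 * |m| ^ 3 + m ^ 4) / ‖x‖ ^ 3 := by
  rw [one_add_div_two_mul_pow_four_sub]
  have hA := abs_inv_norm_sub_sub_inv_norm_sub_inner_div_le h
  have hB := abs_inv_norm_sub_sq_sub_inv_norm_sq_le h
  set r := ‖x‖
  set t := ‖x - c‖⁻¹
  have ht : t ≤ 2 / r := inv_norm_sub_le h
  have ht3 : t ^ 3 ≤ 8 / r ^ 3 := by
    calc t ^ 3 ≤ (2 / r) ^ 3 := by gcongr
      _ = 8 / r ^ 3 := by ring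
  have ht4 : t ^ 4 ≤ 16 / r ^ 3 := by
    calc t ^ 4 ≤ (2 / r) ^ 4 := by gcongr
      _ = 16 / r ^ 4 := by ring
      _ ≤ 16 / r ^ 3 := by gcongr; norm_num
  calc _ ≤ |2 * m * (t - r⁻¹ - ⟪c, x⟫ / r ^ 3)| + |3 / 2 * m ^ 2 * (t ^ 2 - r⁻¹ ^ 2)| +
        |m ^ 3 / 2 * t ^ 3| + |m ^ 4 / 16 * t ^ 4| := norm_add₄_le (E := ℝ)
    _ = 2 * |m| * |t - r⁻¹ - ⟪c, x⟫ / r ^ 3| + 3 / 2 * m ^ 2 * |t ^ 2 - r⁻¹ ^ 2| +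
        |m| ^ 3 / 2 * t ^ 3 + m ^ 4 / 16 * t ^ 4 := by
        simp only [abs_mul, abs_div, abs_pow, abs_of_nonneg (by positivity : 0 ≤ t), Nat.abs_ofNat,
          sq_abs, (by decide : Even 4).pow_abs]
    _ ≤ 2 * |m| * (2 * ‖c‖ ^ 2 / r ^ 3) + 3 / 2 * m ^ 2 * (6 * ‖c‖ / r ^ 3) +
        |m| ^ 3 / 2 * (8 / r ^ 3) + m ^ 4 / 16 * (16 / r ^ 3) := by gcongr
    _ = (4 * |m| * ‖c‖ ^ 2 + 9 * m ^ 2 * ‖c‖ + 4 * |m| ^ 3 + m ^ 4) / r ^ 3 := by ring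

end InverseDistance

/-- the Schwarzschild conformal factor centered at `c` satisfies
`(1 + m/(2|x−c|))⁴ = 1 + 2m/|x| + 2m(c·x)/|x|³ + 3m²/(2|x|²) + O(|x|^{−3})` as `|x| → ∞`. -/
theorem schwarzschild_conformal_factor_expansion (m : ℝ) (c : E3) :
    ∃ C R : ℝ, ∀ x : E3, R ≤ ‖x‖ →
      |(1 + m / (2 * ‖x - c‖)) ^ 4 -
          (1 + 2 * m / ‖x‖ + 2 * m * (∑ i, c i * x i) / ‖x‖ ^ 3 +
            3 * m ^ 2 / (2 * ‖x‖ ^ 2))| ≤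
        C / ‖x‖ ^ 3 := by
  refine ⟨4 * |m| * ‖c‖ ^ 2 + 9 * m ^ 2 * ‖c‖ + 4 * |m| ^ 3 + m ^ 4, 2 * ‖c‖ + 1,
    fun x hx => ?_⟩
  have hinner : ∑ i, c i * x i = ⟪c, x⟫ := by simp [PiLp.inner_apply, mul_comm]
  rw [hinner]
  exact abs_conformal_factor_sub_expansion_le m (by linarith) (by linarith [norm_nonneg c])
end

section
/- The conformal factor ξ(x) = 1 + (∇f(x)·(x−a))/(2 f(x)) satisfies the expansion ξ(x) = 1 − m/ρ + (2m² − γ₂)/ρ² + 2m (x·a)/ρ³ − γ₁ (x·c)/ρ³ + O(ρ^{−3}) as |x| → ∞, where ρ = |x−a|; that is, the difference of the two sides is bounded by a constant times ρ^{−3} for all large |x|. -/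
open Real

noncomputable section

open Asymptotics Filter Topology Bornology RealInnerProductSpace

/-!
With `u = ‖x‖⁻¹`, both `f` and `∇f(x)·(x - a)` are polynomials in `u` whose coefficients are
continuous functions of the bounded quantities `⟪a, x⟫/‖x‖` and `⟪c, x⟫/‖x‖`; dividing them shows
`ξ = 1 - m u + (2m² - γ₂) u² + (m ⟪a, x⟫ - γ₁ ⟪c, x⟫) u³ + O(u³)`, the terms of order `u` and `u²`
of the remainder cancelling. To pass to `ρ = ‖x - a‖`, write `‖x‖/ρ = (1 + w)^(-1/2)` with
`w = ρ²/‖x‖² - 1 = -2⟪a, x⟫u² + ‖a‖²u²`, so that `‖x‖/ρ = 1 + ⟪a, x⟫u² + O(u²)` by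
`(1 + w)^(-1/2) = 1 - w/2 + O(w²)`. Finally `u = O(ρ⁻¹)`.
-/

theorem isBigO_inv_sqrt_one_add_sub_one_add_half :
    (fun w : ℝ => (√(1 + w))⁻¹ - 1 + w / 2) =O[𝓝 0] fun w => w ^ 2 := by
  set h : ℝ → ℝ := fun w => (√(1 + w) + 2) / (2 * √(1 + w) * (1 + √(1 + w)) ^ 2)
  have hh : ContinuousAt h 0 := by
    refine ContinuousAt.div (by fun_prop) (by fun_prop) ?_
    norm_num
  refine ((isBigO_refl (fun w : ℝ => w ^ 2) _).mul (hh.tendsto.isBigO_one ℝ)).congr' ?_ (by simp)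
  filter_upwards [eventually_gt_nhds (show (-1 : ℝ) < 0 by norm_num)] with w hw
  -- with `κ = √(1 + w)`: `κ⁻¹ - 1 + w / 2 = (κ - 1)² (κ + 2) / (2κ)` and `κ - 1 = w / (κ + 1)`
  have hκ : 0 < √(1 + w) := Real.sqrt_pos.mpr (by linarith)
  have hw' : w = √(1 + w) ^ 2 - 1 := by rw [Real.sq_sqrt (by linarith)]; ring
  simp only [h]
  generalize √(1 + w) = κ at hκ hw' ⊢
  subst hw'
  field_simp
  ring

theorem Asymptotics.IsBigO.pow_sub_one {α : Type*} {l : Filter α} {g v : α → ℝ}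
    (hg : Tendsto g l (𝓝 1)) (h : (fun x => g x - 1) =O[l] v) (n : ℕ) :
    (fun x => g x ^ n - 1) =O[l] v := by
  have hsum : (fun x => ∑ i ∈ Finset.range n, g x ^ i) =O[l] (1 : α → ℝ) :=
    (tendsto_finsetSum _ fun i _ => hg.pow i).isBigO_one ℝ
  simpa [geom_sum_mul] using hsum.mul h

theorem isBigO_one_comp_of_continuous {α X : Type*} [NormedAddCommGroup X] [ProperSpace X]
    {l : Filter α} {P : X → ℝ} (hP : Continuous P) {φ : α → X} (hφ : φ =O[l] (1 : α → ℝ)) :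
    (fun x => P (φ x)) =O[l] (1 : α → ℝ) := by
  obtain ⟨C, hC⟩ := hφ.bound
  obtain ⟨M, hM⟩ := (isCompact_closedBall (0 : X) C).exists_bound_of_continuousOn hP.continuousOn
  refine IsBigO.of_bound M ?_
  filter_upwards [hC] with x hx
  simpa using hM (φ x) (by simpa using hx)

theorem tendsto_inv_norm_cobounded {E : Type*} [SeminormedAddCommGroup E] :
    Tendsto (fun x : E => ‖x‖⁻¹) (cobounded E) (𝓝 0) :=
  tendsto_inv_atTop_zero.comp tendsto_norm_cobounded_atTop

section InnerProductSpace

variable {E : Type*} [NormedAddCommGroup E] [InnerProductSpace ℝ E]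

theorem hasFDerivAt_norm_of_ne_zero {x : E} (hx : x ≠ 0) :
    HasFDerivAt (‖·‖) (‖x‖⁻¹ • innerSL ℝ x) x := by
  have h := (Real.hasDerivAt_sqrt (by positivity : ‖x‖ ^ 2 ≠ 0)).comp_hasFDerivAt x
    (hasStrictFDerivAt_norm_sq x).hasFDerivAt
  simp only [Function.comp_def, Real.sqrt_sq (norm_nonneg _)] at h
  refine h.congr_fderiv ?_
  ext v
  simp
  field_simp

theorem isBigO_inner_div_norm (a : E) (l : Filter E) :
    (fun x => ⟪a, x⟫ / ‖x‖) =O[l] (1 : E → ℝ) := by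
  refine IsBigO.of_bound ‖a‖ (Eventually.of_forall fun x => ?_)
  rw [Pi.one_apply, norm_one, mul_one, Real.norm_eq_abs, abs_div, abs_norm]
  exact div_le_of_le_mul₀ (norm_nonneg _) (norm_nonneg _) (abs_real_inner_le_norm a x)

variable (m γ₁ γ₂ : ℝ) (a c : E)

theorem isBigO_inv_norm_pow_mul_comp {P : ℝ × ℝ × ℝ → ℝ} (hP : Continuous P) (k : ℕ) :
    (fun x => ‖x‖⁻¹ ^ k * P (‖x‖⁻¹, ⟪a, x⟫ / ‖x‖, ⟪c, x⟫ / ‖x‖)) =O[cobounded E]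
      fun x => ‖x‖⁻¹ ^ k := by
  have hφ := ((tendsto_inv_norm_cobounded (E := E)).isBigO_one ℝ).prod_left
    ((isBigO_inner_div_norm a _).prod_left (isBigO_inner_div_norm c _))
  simpa using (isBigO_refl (fun x : E => ‖x‖⁻¹ ^ k) _).mul (isBigO_one_comp_of_continuous hP hφ)

theorem isBigO_norm_sub_sq_div_norm_sq_sub_one :
    (fun x => ‖x - a‖ ^ 2 / ‖x‖ ^ 2 - 1) =O[cobounded E] fun x => ‖x‖⁻¹ := by
  refine (isBigO_inv_norm_pow_mul_comp a a (P := fun p => ‖a‖ ^ 2 * p.1 - 2 * p.2.1)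
    (by fun_prop) 1).congr' ?_ (by simp)
  filter_upwards [eventually_ne_cobounded 0] with x hx
  rw [norm_sub_sq_real, real_inner_comm]
  field_simp
  ring

theorem isBigO_norm_div_norm_sub_sub_one_sub :
    (fun x => ‖x‖ / ‖x - a‖ - 1 - ⟪a, x⟫ / ‖x‖ ^ 2) =O[cobounded E] fun x => ‖x‖⁻¹ ^ 2 := by
  have hw := isBigO_norm_sub_sq_div_norm_sq_sub_one a
  have h := (isBigO_inv_sqrt_one_add_sub_one_add_half.comp_tendsto
    (hw.trans_tendsto tendsto_inv_norm_cobounded)).trans (hw.pow 2)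
  refine (h.sub (isBigO_const_mul_self (‖a‖ ^ 2 / 2) _ _)).congr' ?_ (by simp)
  filter_upwards [eventually_ne_cobounded 0] with x hx
  have hsqrt : √(1 + (‖x - a‖ ^ 2 / ‖x‖ ^ 2 - 1)) = ‖x - a‖ / ‖x‖ := by
    rw [add_sub_cancel, ← div_pow, Real.sqrt_sq (by positivity)]
  simp only [Function.comp_apply, hsqrt, inv_div]
  rw [norm_sub_sq_real, real_inner_comm]
  field_simp
  ring

theorem isBigO_norm_div_norm_sub_sub_one :
    (fun x => ‖x‖ / ‖x - a‖ - 1) =O[cobounded E] fun x => ‖x‖⁻¹ := by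
  have hsq : (fun x : E => ‖x‖⁻¹ ^ 2) =O[cobounded E] fun x => ‖x‖⁻¹ := by
    simpa [sq] using (isBigO_refl (fun x : E => ‖x‖⁻¹) _).mul
      ((tendsto_inv_norm_cobounded (E := E)).isBigO_one ℝ)
  have hσ := (isBigO_inv_norm_pow_mul_comp a a (P := fun p => p.2.1) (by fun_prop) 1).congr_right
    fun _ => pow_one _
  refine (((isBigO_norm_div_norm_sub_sub_one_sub a).trans hsq).add hσ).congr' ?_ (by simp)
  filter_upwards [eventually_ne_cobounded 0] with x hx
  field_simp
  ring

theorem tendsto_norm_div_norm_sub_cobounded :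
    Tendsto (fun x => ‖x‖ / ‖x - a‖) (cobounded E) (𝓝 1) :=
  tendsto_sub_nhds_zero_iff.mp
    ((isBigO_norm_div_norm_sub_sub_one a).trans_tendsto tendsto_inv_norm_cobounded)

theorem isBigO_inv_norm_inv_norm_sub :
    (fun x : E => ‖x‖⁻¹) =O[cobounded E] fun x => ‖x - a‖⁻¹ := by
  have h := ((tendsto_norm_div_norm_sub_cobounded a).inv₀ one_ne_zero).isBigO_one ℝ
  refine ((isBigO_refl (fun x : E => ‖x - a‖⁻¹) _).mul h).congr' ?_ (by simp)
  filter_upwards [eventually_ne_cobounded a] with x hx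
  have : ‖x - a‖ ≠ 0 := norm_ne_zero_iff.mpr (sub_ne_zero.mpr hx)
  field_simp

def conformalFactor (f : E → ℝ) (x : E) : ℝ :=
  1 + fderiv ℝ f x (x - a) / (2 * f x)

def metricDensity (x : E) : ℝ :=
  1 + 2 * m / ‖x‖ + γ₁ * ⟪c, x⟫ / ‖x‖ ^ 3 + γ₂ / ‖x‖ ^ 2

theorem fderiv_metricDensity_apply {x : E} (hx : x ≠ 0) (v : E) :
    fderiv ℝ (metricDensity m γ₁ γ₂ c) x v =
      -‖x‖⁻¹ ^ 3 * ⟪x, v⟫ * (2 * m + 3 * γ₁ * ⟪c, x⟫ * ‖x‖⁻¹ ^ 2 + 2 * γ₂ * ‖x‖⁻¹)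
        + γ₁ * ⟪c, v⟫ * ‖x‖⁻¹ ^ 3 := by
  have hu : HasFDerivAt (fun y : E => ‖y‖⁻¹) _ x :=
    (hasDerivAt_inv (norm_ne_zero_iff.mpr hx)).comp_hasFDerivAt x (hasFDerivAt_norm_of_ne_zero hx)
  have hD : HasFDerivAt
      (fun y => 1 + 2 * m * ‖y‖⁻¹ + γ₁ * ⟪c, y⟫ * ‖y‖⁻¹ ^ 3 + γ₂ * ‖y‖⁻¹ ^ 2) _ x :=
    (((hasFDerivAt_const 1 x).add (hu.const_mul (2 * m))).add
      (((innerSL ℝ c).hasFDerivAt.const_mul γ₁).mul (hu.pow 3))).add ((hu.pow 2).const_mul γ₂)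
  have hfun : metricDensity m γ₁ γ₂ c =
      fun y => 1 + 2 * m * ‖y‖⁻¹ + γ₁ * ⟪c, y⟫ * ‖y‖⁻¹ ^ 3 + γ₂ * ‖y‖⁻¹ ^ 2 := by
    ext y
    simp only [metricDensity, div_eq_mul_inv, inv_pow]
  rw [hfun, hD.fderiv]
  simp
  ring

theorem tendsto_metricDensity_cobounded :
    Tendsto (metricDensity m γ₁ γ₂ c) (cobounded E) (𝓝 1) := by
  have h := (isBigO_inv_norm_pow_mul_comp c c (P := fun p => 2 * m + (γ₁ * p.2.2 + γ₂) * p.1)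
    (by fun_prop) 1).trans_tendsto (by simpa using tendsto_inv_norm_cobounded)
  rw [← tendsto_sub_nhds_zero_iff]
  refine h.congr' ?_
  filter_upwards [eventually_ne_cobounded 0] with x hx
  simp only [metricDensity]
  field_simp
  ring

theorem isBigO_conformalFactor_metricDensity_sub :
    (fun x => conformalFactor a (metricDensity m γ₁ γ₂ c) x -
        (1 - m / ‖x‖ + (2 * m ^ 2 - γ₂) / ‖x‖ ^ 2 + (m * ⟪a, x⟫ - γ₁ * ⟪c, x⟫) / ‖x‖ ^ 3))
      =O[cobounded E] fun x => ‖x‖⁻¹ ^ 3 := by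
  -- with `Q` the subtracted expansion, `P` is the coefficient of `‖x‖⁻³` in
  -- `∇f(x)·(x - a) - 2 f(x) (Q - 1)`; the coefficients of `‖x‖⁻¹` and `‖x‖⁻²` vanish
  have hB := isBigO_inv_norm_pow_mul_comp a c (k := 3) (by fun_prop) (P := fun p =>
    let q := 2 * m ^ 2 - γ₂ + m * p.2.1 - γ₁ * p.2.2
    3 * γ₁ * p.2.2 * p.2.1 + 2 * γ₂ * p.2.1 - γ₁ * ⟪c, a⟫ - 4 * m * q
      + 2 * m * (γ₁ * p.2.2 + γ₂) - 2 * q * (γ₁ * p.2.2 + γ₂) * p.1)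
  have hF := ((tendsto_metricDensity_cobounded m γ₁ γ₂ c).const_mul 2).inv₀ (by norm_num)
  refine (hB.mul (hF.isBigO_one ℝ)).congr' ?_ (by simp)
  filter_upwards [eventually_ne_cobounded 0,
    (tendsto_metricDensity_cobounded m γ₁ γ₂ c).eventually_ne one_ne_zero] with x hx hFx
  rw [conformalFactor, fderiv_metricDensity_apply _ _ _ _ hx, inner_sub_right, inner_sub_right,
    real_inner_self_eq_norm_sq, real_inner_comm a x]
  generalize hF : metricDensity m γ₁ γ₂ c x = F at hFx ⊢
  field_simp
  rw [← hF, metricDensity]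
  field_simp
  ring

theorem isBigO_shifted_expansion_sub :
    (fun x => (1 - m / ‖x - a‖ + (2 * m ^ 2 - γ₂) / ‖x - a‖ ^ 2 + 2 * m * ⟪a, x⟫ / ‖x - a‖ ^ 3
          - γ₁ * ⟪c, x⟫ / ‖x - a‖ ^ 3) -
        (1 - m / ‖x‖ + (2 * m ^ 2 - γ₂) / ‖x‖ ^ 2 + (m * ⟪a, x⟫ - γ₁ * ⟪c, x⟫) / ‖x‖ ^ 3))
      =O[cobounded E] fun x => ‖x‖⁻¹ ^ 3 := by
  have hg := tendsto_norm_div_norm_sub_cobounded a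
  have hg1 := isBigO_norm_div_norm_sub_sub_one a
  have h₁ : _ =O[cobounded E] fun x => ‖x‖⁻¹ ^ 3 :=
    (((isBigO_refl (fun x : E => ‖x‖⁻¹) _).const_mul_left (-m)).mul
      (isBigO_norm_div_norm_sub_sub_one_sub a)).congr_right fun _ => by ring
  have h₂ : _ =O[cobounded E] fun x => ‖x‖⁻¹ ^ 3 :=
    (((isBigO_refl (fun x : E => ‖x‖⁻¹ ^ 2) _).const_mul_left (2 * m ^ 2 - γ₂)).mul
      (hg1.pow_sub_one hg 2)).congr_right fun _ => by ring
  have h₃ : _ =O[cobounded E] fun x => ‖x‖⁻¹ ^ 3 :=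
    ((isBigO_inv_norm_pow_mul_comp a c (P := fun p => 2 * m * p.2.1 - γ₁ * p.2.2)
      (by fun_prop) 2).mul (hg1.pow_sub_one hg 3)).congr_right fun _ => by ring
  refine ((h₁.add h₂).add h₃).congr' ?_ (by simp)
  filter_upwards [eventually_ne_cobounded 0, eventually_ne_cobounded a] with x hx hxa
  have : ‖x - a‖ ≠ 0 := norm_ne_zero_iff.mpr (sub_ne_zero.mpr hxa)
  field_simp
  ring

end InnerProductSpace

/-- the conformal factor `ξ(x) = 1 + (∇f(x)·(x−a))/(2 f(x))` of the radial field
`X = x − a` with respect to the metric `f δ` satisfies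
`ξ(x) = 1 − m/ρ + (2m² − γ₂)/ρ² + 2m(x·a)/ρ³ − γ₁(x·c)/ρ³ + O(ρ^{−3})`, `ρ = |x−a|`. -/
theorem conformal_factor_expansion
    (m γ₁ γ₂ : ℝ) (a c : E3)
    (f : E3 → ℝ)
    (hf : ∀ x : E3,
      f x = 1 + 2 * m / ‖x‖ + γ₁ * (∑ i, c i * x i) / ‖x‖ ^ 3 + γ₂ / ‖x‖ ^ 2)
    (ξ : E3 → ℝ)
    (hξ : ∀ x : E3, ξ x = 1 + (fderiv ℝ f x) (x - a) / (2 * f x)) :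
    ∃ C R : ℝ, ∀ x : E3, R ≤ ‖x‖ →
      |ξ x -
          (1 - m / ‖x - a‖ + (2 * m ^ 2 - γ₂) / ‖x - a‖ ^ 2 +
            2 * m * (∑ i, x i * a i) / ‖x - a‖ ^ 3 -
            γ₁ * (∑ i, x i * c i) / ‖x - a‖ ^ 3)| ≤
        C / ‖x - a‖ ^ 3 := by
  have hf' : f = metricDensity m γ₁ γ₂ c := funext fun x => by
    simp [hf, metricDensity, PiLp.inner_apply, mul_comm]
  have h := ((isBigO_conformalFactor_metricDensity_sub m γ₁ γ₂ a c).sub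
    (isBigO_shifted_expansion_sub m γ₁ γ₂ a c)).trans ((isBigO_inv_norm_inv_norm_sub a).pow 3)
  obtain ⟨C, hC⟩ := h.bound
  obtain ⟨R, -, hR⟩ := hasBasis_cobounded_norm.eventually_iff.mp hC
  refine ⟨C, R, fun x hx => ?_⟩
  have hsum (v : E3) : ∑ i, x i * v i = ⟪v, x⟫ := by simp [PiLp.inner_apply]
  simpa [hξ, hsum, conformalFactor, hf', div_eq_mul_inv] using hR hx
end
end

section
/- The outward g-unit normal to the Euclidean sphere {y : |y−a| = ρ} at x, namely ν(x) = g(x)⁻¹𝔯 / √(𝔯ᵀ g(x)⁻¹ 𝔯) with 𝔯 = (x−a)/|x−a|, satisfies ν(x) = f(x)^{−1/2} 𝔯 + O(ρ^{−2−ε}), and the g-inner product of X(x) = x − a with ν satisfies (x−a)ᵀ g(x) ν(x) = f(x)^{1/2} ρ + O(ρ^{−1−ε}), where ρ = |x−a| and the O-bounds hold for all large |x|. -/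
open Real Matrix

noncomputable section

/-!
Write `g = f • 1 + p` with `|pᵢⱼ| ≤ η := |C| ‖x‖^(-2-ε)` and `f → 1`. From `f u = 𝔯 - p u` the
vector `u = g⁻¹ 𝔯` is `f⁻¹ 𝔯 + O(η)`; as `𝔯` is a unit vector, `s = 𝔯 ⬝ u = f⁻¹ + O(η)`, hence
`s^{-1/2} = f^{1/2} + O(η)`. Both expansions follow, since `ν = s^{-1/2} u` and
`(x - a)ᵀ g ν = ρ 𝔯ᵀ 𝔯 s^{-1/2} = ρ s^{-1/2}`; finally `‖x‖` and `ρ = ‖x - a‖` are comparable, so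
`η = O(ρ^(-2-ε))`.
-/

lemma Real.abs_sqrt_sub_one_le {t : ℝ} (ht : 0 ≤ t) : |√t - 1| ≤ |t - 1| := by
  have h : t - 1 = (√t - 1) * (√t + 1) := by
    linear_combination -(sq_sqrt ht)
  rw [h, abs_mul]
  exact le_mul_of_one_le_right (abs_nonneg _)
    (by rw [abs_of_pos (by positivity)]; linarith [sqrt_nonneg t])

lemma Real.abs_inv_sqrt_sub_sqrt_le {s f : ℝ} (hs : 0 < s) (hf : 0 < f) :
    |(√s)⁻¹ - √f| ≤ f * |s - f⁻¹| / √s := by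
  have hs' : 0 < √s := sqrt_pos.mpr hs
  have h : (√s)⁻¹ - √f = -(√(s * f) - 1) / √s := by
    rw [sqrt_mul hs.le]; field_simp; ring
  have h' : f * |s - f⁻¹| = |s * f - 1| := by
    rw [← abs_of_pos hf, ← abs_mul, abs_of_pos hf]; congr 1; field_simp
  rw [h, h', abs_div, abs_neg, abs_of_pos hs']
  exact div_le_div_of_nonneg_right (abs_sqrt_sub_one_le (by positivity)) hs'.le

namespace Matrix

variable {ι : Type*} [Fintype ι]

-- On `ι → ℝ`, `‖·‖` is the sup norm.

lemma norm_mulVec_le_of_abs_le {P : Matrix ι ι ℝ} {η : ℝ} (hP : ∀ i j, |P i j| ≤ η)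
    (hη : 0 ≤ η) (v : ι → ℝ) : ‖P *ᵥ v‖ ≤ Fintype.card ι * η * ‖v‖ := by
  refine (pi_norm_le_iff_of_nonneg (by positivity)).mpr fun i => ?_
  calc ‖(P *ᵥ v) i‖ ≤ ∑ j, |P i j| * ‖v j‖ := by
        simpa only [mulVec, dotProduct, Real.norm_eq_abs, abs_mul] using
          Finset.abs_sum_le_sum_abs (fun j => P i j * v j) Finset.univ
    _ ≤ ∑ _j : ι, η * ‖v‖ := by gcongr with j; exacts [hP i j, norm_le_pi_norm v j]
    _ = Fintype.card ι * η * ‖v‖ := by simp [mul_assoc]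

lemma abs_dotProduct_le (v w : ι → ℝ) : |v ⬝ᵥ w| ≤ Fintype.card ι * ‖v‖ * ‖w‖ := by
  calc |v ⬝ᵥ w| ≤ ∑ i, ‖v i‖ * ‖w i‖ := by
        simpa only [dotProduct, Real.norm_eq_abs, abs_mul] using
          Finset.abs_sum_le_sum_abs (fun i => v i * w i) Finset.univ
    _ ≤ ∑ _i : ι, ‖v‖ * ‖w‖ := by
        gcongr with i; exacts [norm_le_pi_norm v i, norm_le_pi_norm w i]
    _ = Fintype.card ι * ‖v‖ * ‖w‖ := by simp [mul_assoc]

lemma norm_le_one_of_dotProduct_self_eq_one {r : ι → ℝ} (hr : r ⬝ᵥ r = 1) : ‖r‖ ≤ 1 := by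
  refine (pi_norm_le_iff_of_nonneg zero_le_one).mpr fun i => ?_
  rw [Real.norm_eq_abs, ← sq_le_one_iff_abs_le_one, ← hr, dotProduct, sq]
  exact Finset.single_le_sum (f := fun j => r j * r j) (fun j _ => mul_self_nonneg _)
    (Finset.mem_univ i)

section Perturbation

variable [DecidableEq ι] {f η : ℝ} {P : Matrix ι ι ℝ}

lemma norm_le_of_smul_one_add_mulVec_eq (hP : ∀ i j, |P i j| ≤ η) (hη : 0 ≤ η)
    (hf : Fintype.card ι * η < f) {u r : ι → ℝ} (h : (f • 1 + P) *ᵥ u = r) :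
    ‖u‖ ≤ ‖r‖ / (f - Fintype.card ι * η) := by
  have hf0 : 0 < f := lt_of_le_of_lt (by positivity) hf
  have hfu : f • u = r - P *ᵥ u := by
    rw [← h, add_mulVec, smul_mulVec, one_mulVec, add_sub_cancel_right]
  have key : f * ‖u‖ ≤ ‖r‖ + Fintype.card ι * η * ‖u‖ := by
    calc f * ‖u‖ = ‖r - P *ᵥ u‖ := by rw [← hfu, norm_smul, Real.norm_of_nonneg hf0.le]
      _ ≤ ‖r‖ + ‖P *ᵥ u‖ := norm_sub_le _ _
      _ ≤ ‖r‖ + Fintype.card ι * η * ‖u‖ := by gcongr; exact norm_mulVec_le_of_abs_le hP hη u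
  rw [le_div_iff₀ (by linarith)]
  linarith

lemma isUnit_smul_one_add (hP : ∀ i j, |P i j| ≤ η) (hη : 0 ≤ η)
    (hf : Fintype.card ι * η < f) : IsUnit (f • 1 + P) := by
  refine mulVec_injective_iff_isUnit.mp fun u w h => ?_
  have h0 : (f • 1 + P) *ᵥ (u - w) = 0 := by rw [mulVec_sub, h, sub_self]
  have := norm_le_of_smul_one_add_mulVec_eq hP hη hf h0
  rw [norm_zero, zero_div, norm_le_zero_iff] at this
  exact sub_eq_zero.mp this

lemma norm_sub_inv_smul_le_of_smul_one_add_mulVec_eq (hP : ∀ i j, |P i j| ≤ η) (hη : 0 ≤ η)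
    (hf : 0 < f) {u r : ι → ℝ} (h : (f • 1 + P) *ᵥ u = r) :
    ‖u - f⁻¹ • r‖ ≤ Fintype.card ι * η * ‖u‖ / f := by
  have hu : u - f⁻¹ • r = -(f⁻¹ • P *ᵥ u) := by
    rw [← h, add_mulVec, smul_mulVec, one_mulVec, smul_add, inv_smul_smul₀ hf.ne']
    abel
  rw [hu, norm_neg, norm_smul, norm_inv, Real.norm_of_nonneg hf.le, inv_mul_eq_div]
  exact div_le_div_of_nonneg_right (norm_mulVec_le_of_abs_le hP hη u) hf.le

end Perturbation

section SmallPerturbation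

variable [DecidableEq ι] {f η : ℝ} {P : Matrix ι ι ℝ} {r : ι → ℝ}

lemma norm_inv_mulVec_sub_inv_smul_le (hP : ∀ i j, |P i j| ≤ η) (hη : 0 ≤ η) (hf : 3 / 4 ≤ f)
    (hsmall : Fintype.card ι * η ≤ 1 / 4) (hr : ‖r‖ ≤ 1) :
    ‖(f • 1 + P)⁻¹ *ᵥ r - f⁻¹ • r‖ ≤ 3 * Fintype.card ι * η := by
  have hG : IsUnit (f • 1 + P) := isUnit_smul_one_add hP hη (by linarith)
  have hu : (f • 1 + P) *ᵥ ((f • 1 + P)⁻¹ *ᵥ r) = r := by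
    rw [mulVec_mulVec, mul_nonsing_inv _ ((isUnit_iff_isUnit_det _).mp hG), one_mulVec]
  have hu_le : ‖(f • 1 + P)⁻¹ *ᵥ r‖ ≤ 2 :=
    (norm_le_of_smul_one_add_mulVec_eq hP hη (by linarith) hu).trans
      (by rw [div_le_iff₀ (by linarith)]; linarith)
  have hnη : 0 ≤ Fintype.card ι * η := by positivity
  calc _ ≤ Fintype.card ι * η * ‖(f • 1 + P)⁻¹ *ᵥ r‖ / f :=
        norm_sub_inv_smul_le_of_smul_one_add_mulVec_eq hP hη (by linarith) hu
    _ ≤ Fintype.card ι * η * 2 / (3 / 4) := by gcongr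
    _ ≤ 3 * Fintype.card ι * η := by linarith

lemma abs_dotProduct_inv_mulVec_sub_inv_le (hP : ∀ i j, |P i j| ≤ η) (hη : 0 ≤ η)
    (hf : 3 / 4 ≤ f) (hsmall : Fintype.card ι * η ≤ 1 / 4) (hr : r ⬝ᵥ r = 1) :
    |r ⬝ᵥ (f • 1 + P)⁻¹ *ᵥ r - f⁻¹| ≤ 3 * Fintype.card ι ^ 2 * η := by
  have hr1 := norm_le_one_of_dotProduct_self_eq_one hr
  have h : r ⬝ᵥ (f • 1 + P)⁻¹ *ᵥ r - f⁻¹ = r ⬝ᵥ ((f • 1 + P)⁻¹ *ᵥ r - f⁻¹ • r) := by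
    rw [dotProduct_sub, dotProduct_smul, hr, smul_eq_mul, mul_one]
  rw [h]
  calc _ ≤ Fintype.card ι * ‖r‖ * ‖(f • 1 + P)⁻¹ *ᵥ r - f⁻¹ • r‖ := abs_dotProduct_le _ _
    _ ≤ Fintype.card ι * 1 * (3 * Fintype.card ι * η) := by
        gcongr; exact norm_inv_mulVec_sub_inv_smul_le hP hη hf hsmall hr1
    _ = 3 * Fintype.card ι ^ 2 * η := by ring

end SmallPerturbation

end Matrix

lemma Nat.cast_mul_le_cast_sq_mul (n : ℕ) {η : ℝ} (hη : 0 ≤ η) : (n : ℝ) * η ≤ n ^ 2 * η :=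
  mul_le_mul_of_nonneg_right (by exact_mod_cast Nat.le_self_pow two_ne_zero n) hη

section UnitNormal

open Matrix

variable {ι : Type*} [Fintype ι] [DecidableEq ι]

def unitNormal (G : Matrix ι ι ℝ) (r : ι → ℝ) : ι → ℝ :=
  (√(r ⬝ᵥ G⁻¹ *ᵥ r))⁻¹ • (G⁻¹ *ᵥ r)

lemma dotProduct_mulVec_unitNormal {G : Matrix ι ι ℝ} (hG : IsUnit G.det) (r : ι → ℝ) :
    r ⬝ᵥ G *ᵥ unitNormal G r = (√(r ⬝ᵥ G⁻¹ *ᵥ r))⁻¹ * (r ⬝ᵥ r) := by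
  rw [unitNormal, mulVec_smul, mulVec_mulVec, mul_nonsing_inv _ hG, one_mulVec, dotProduct_smul,
    smul_eq_mul]

variable {f η : ℝ} {P : Matrix ι ι ℝ} {r : ι → ℝ}

lemma quarter_le_dotProduct_inv_mulVec (hP : ∀ i j, |P i j| ≤ η) (hη : 0 ≤ η)
    (hf : |f - 1| ≤ 1 / 4) (hsmall : (Fintype.card ι : ℝ) ^ 2 * η ≤ 1 / 16) (hr : r ⬝ᵥ r = 1) :
    1 / 4 ≤ r ⬝ᵥ (f • 1 + P)⁻¹ *ᵥ r := by
  have hf' := abs_le.mp hf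
  have hn := Nat.cast_mul_le_cast_sq_mul (Fintype.card ι) hη
  have hs := abs_le.mp
    (abs_dotProduct_inv_mulVec_sub_inv_le (f := f) hP hη (by linarith) (by linarith) hr)
  have hfinv : 4 / 5 ≤ f⁻¹ := by
    rw [le_inv_comm₀ (by norm_num) (by linarith)]; linarith
  linarith

lemma abs_inv_sqrt_dotProduct_inv_mulVec_sub_sqrt_le (hP : ∀ i j, |P i j| ≤ η) (hη : 0 ≤ η)
    (hf : |f - 1| ≤ 1 / 4) (hsmall : (Fintype.card ι : ℝ) ^ 2 * η ≤ 1 / 16) (hr : r ⬝ᵥ r = 1) :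
    |(√(r ⬝ᵥ (f • 1 + P)⁻¹ *ᵥ r))⁻¹ - √f| ≤ 8 * Fintype.card ι ^ 2 * η := by
  have hf' := abs_le.mp hf
  have hn := Nat.cast_mul_le_cast_sq_mul (Fintype.card ι) hη
  have hs := quarter_le_dotProduct_inv_mulVec hP hη hf hsmall hr
  have hsqrt : 1 / 2 ≤ √(r ⬝ᵥ (f • 1 + P)⁻¹ *ᵥ r) :=
    (Real.le_sqrt (by norm_num) (by linarith)).mpr (by linarith)
  calc _ ≤ f * |r ⬝ᵥ (f • 1 + P)⁻¹ *ᵥ r - f⁻¹| / √(r ⬝ᵥ (f • 1 + P)⁻¹ *ᵥ r) :=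
        Real.abs_inv_sqrt_sub_sqrt_le (by linarith) (by linarith)
    _ ≤ 5 / 4 * (3 * Fintype.card ι ^ 2 * η) / (1 / 2) := by
        gcongr
        · linarith
        · exact abs_dotProduct_inv_mulVec_sub_inv_le hP hη (by linarith) (by linarith) hr
    _ ≤ 8 * Fintype.card ι ^ 2 * η := by nlinarith

lemma norm_unitNormal_sub_le (hP : ∀ i j, |P i j| ≤ η) (hη : 0 ≤ η)
    (hf : |f - 1| ≤ 1 / 4) (hsmall : (Fintype.card ι : ℝ) ^ 2 * η ≤ 1 / 16) (hr : r ⬝ᵥ r = 1) :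
    ‖unitNormal (f • 1 + P) r - (√f)⁻¹ • r‖ ≤ 17 * Fintype.card ι ^ 2 * η := by
  have hf' := abs_le.mp hf
  have hn := Nat.cast_mul_le_cast_sq_mul (Fintype.card ι) hη
  set s := r ⬝ᵥ (f • 1 + P)⁻¹ *ᵥ r
  set u := (f • 1 + P)⁻¹ *ᵥ r
  have hs : 1 / 4 ≤ s := quarter_le_dotProduct_inv_mulVec hP hη hf hsmall hr
  have hsqrt : 1 / 2 ≤ √s := (Real.le_sqrt (by norm_num) (by linarith)).mpr (by linarith)
  have hsqrt_inv : (√s)⁻¹ ≤ 2 := by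
    rw [inv_le_comm₀ (by linarith) (by norm_num)]; linarith
  have hfr : ‖f⁻¹ • r‖ ≤ 4 / 3 := by
    rw [norm_smul, norm_inv, Real.norm_of_nonneg (by linarith)]
    calc f⁻¹ * ‖r‖ ≤ (3 / 4)⁻¹ * 1 := by
          gcongr
          · linarith
          · exact norm_le_one_of_dotProduct_self_eq_one hr
      _ = 4 / 3 := by norm_num
  have hsplit : unitNormal (f • 1 + P) r - (√f)⁻¹ • r =
      (√s)⁻¹ • (u - f⁻¹ • r) + ((√s)⁻¹ - √f) • (f⁻¹ • r) := by
    have hf_inv : (√f)⁻¹ = √f * f⁻¹ := by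
      have hf0 : 0 < f := by linarith
      field_simp
      rw [Real.sq_sqrt hf0.le]
    rw [unitNormal, hf_inv]; module
  calc _ ≤ ‖(√s)⁻¹ • (u - f⁻¹ • r)‖ + ‖((√s)⁻¹ - √f) • (f⁻¹ • r)‖ := hsplit ▸ norm_add_le _ _
    _ = (√s)⁻¹ * ‖u - f⁻¹ • r‖ + |(√s)⁻¹ - √f| * ‖f⁻¹ • r‖ := by
        rw [norm_smul, norm_smul, Real.norm_eq_abs, Real.norm_eq_abs,
          abs_of_nonneg (by positivity)]
    _ ≤ 2 * (3 * Fintype.card ι * η) + 8 * Fintype.card ι ^ 2 * η * (4 / 3) := by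
        gcongr
        · exact norm_inv_mulVec_sub_inv_smul_le hP hη (by linarith) (by linarith)
            (norm_le_one_of_dotProduct_self_eq_one hr)
        · exact abs_inv_sqrt_dotProduct_inv_mulVec_sub_sqrt_le hP hη hf hsmall hr
    _ ≤ 17 * Fintype.card ι ^ 2 * η := by nlinarith

lemma abs_dotProduct_mulVec_unitNormal_sub_sqrt_le (hP : ∀ i j, |P i j| ≤ η) (hη : 0 ≤ η)
    (hf : |f - 1| ≤ 1 / 4) (hsmall : (Fintype.card ι : ℝ) ^ 2 * η ≤ 1 / 16) (hr : r ⬝ᵥ r = 1) :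
    |r ⬝ᵥ (f • 1 + P) *ᵥ unitNormal (f • 1 + P) r - √f| ≤ 8 * Fintype.card ι ^ 2 * η := by
  have hn := Nat.cast_mul_le_cast_sq_mul (Fintype.card ι) hη
  have hG : IsUnit (f • 1 + P).det := (isUnit_iff_isUnit_det _).mp <|
    isUnit_smul_one_add hP hη (by linarith [abs_le.mp hf])
  rw [dotProduct_mulVec_unitNormal hG, hr, mul_one]
  exact abs_inv_sqrt_dotProduct_inv_mulVec_sub_sqrt_le hP hη hf hsmall hr

end UnitNormal

section Euclidean

variable {ι : Type*} [Fintype ι]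

lemma EuclideanSpace.abs_sum_mul_le_norm_mul_norm (c x : EuclideanSpace ℝ ι) :
    |∑ i, c i * x i| ≤ ‖c‖ * ‖x‖ := by
  simpa [PiLp.inner_apply, mul_comm] using abs_real_inner_le_norm c x

lemma EuclideanSpace.dotProduct_self_div_norm {v : EuclideanSpace ℝ ι} (hv : v ≠ 0) :
    (fun i => v i / ‖v‖) ⬝ᵥ (fun i => v i / ‖v‖) = 1 := by
  have hv' : ‖v‖ ≠ 0 := norm_ne_zero_iff.mpr hv
  simp only [dotProduct, ← sq, div_pow]
  rw [← Finset.sum_div, ← EuclideanSpace.real_norm_sq_eq, div_self (pow_ne_zero 2 hv')]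

lemma EuclideanSpace.sum_mul_eq_norm_mul_dotProduct {v : EuclideanSpace ℝ ι} (hv : v ≠ 0)
    (w : ι → ℝ) : ∑ i, v i * w i = ‖v‖ * ((fun i => v i / ‖v‖) ⬝ᵥ w) := by
  have hv' : ‖v‖ ≠ 0 := norm_ne_zero_iff.mpr hv
  simp only [dotProduct, Finset.mul_sum]
  refine Finset.sum_congr rfl fun i _ => ?_
  field_simp

end Euclidean

lemma Real.rpow_le_two_rpow_mul_rpow {t ρ z : ℝ} (hρ : 0 < ρ) (h : ρ ≤ 2 * t) (hz : z ≤ 0) :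
    t ^ z ≤ 2 ^ (-z) * ρ ^ z := by
  have ht : 0 ≤ t := by linarith
  calc t ^ z = 2 ^ (-z) * (2 * t) ^ z := by
        rw [mul_rpow zero_le_two ht, ← mul_assoc, ← rpow_add two_pos, neg_add_cancel, rpow_zero,
          one_mul]
    _ ≤ 2 ^ (-z) * ρ ^ z :=
        mul_le_mul_of_nonneg_left (rpow_le_rpow_of_nonpos hρ h hz) (by positivity)

lemma Real.rpow_le_inv_of_le_neg_one {t z : ℝ} (ht : 1 ≤ t) (hz : z ≤ -1) : t ^ z ≤ t⁻¹ := by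
  simpa [rpow_neg_one] using rpow_le_rpow_of_exponent_le ht hz

lemma abs_sub_one_le_div {m γ₁ γ₂ d K t : ℝ} (ht : 1 ≤ t) (hd : |d| ≤ K * t) :
    |1 + 2 * m / t + γ₁ * d / t ^ 3 + γ₂ / t ^ 2 - 1| ≤ (2 * |m| + |γ₁| * K + |γ₂|) / t := by
  have ht0 : 0 < t := by linarith
  have h1 : |2 * m / t| = 2 * |m| / t := by rw [abs_div, abs_mul, abs_two, abs_of_pos ht0]
  have h2 : |γ₁ * d / t ^ 3| ≤ |γ₁| * K / t := by
    have hK : 0 ≤ |γ₁| * K :=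
      mul_nonneg (abs_nonneg _) (nonneg_of_mul_nonneg_left ((abs_nonneg d).trans hd) ht0)
    rw [abs_div, abs_mul, abs_of_pos (pow_pos ht0 3), div_le_div_iff₀ (pow_pos ht0 3) ht0]
    calc |γ₁| * |d| * t ≤ |γ₁| * (K * t) * t := by gcongr
      _ = |γ₁| * K * t ^ 2 := by ring
      _ ≤ |γ₁| * K * t ^ 3 := mul_le_mul_of_nonneg_left (pow_le_pow_right₀ ht (by norm_num)) hK
  have h3 : |γ₂ / t ^ 2| ≤ |γ₂| / t := by
    rw [abs_div, abs_of_pos (pow_pos ht0 2)]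
    exact div_le_div_of_nonneg_left (abs_nonneg γ₂) ht0 (by nlinarith)
  calc _ = |2 * m / t + γ₁ * d / t ^ 3 + γ₂ / t ^ 2| := by ring_nf
    _ ≤ |2 * m / t| + |γ₁ * d / t ^ 3| + |γ₂ / t ^ 2| := abs_add_three _ _ _
    _ ≤ 2 * |m| / t + |γ₁| * K / t + |γ₂| / t := by rw [h1]; gcongr
    _ = _ := by ring

lemma unitNormal_expansion_of_abs_le {ι : Type*} [Fintype ι] [DecidableEq ι] {f η : ℝ}
    {P : Matrix ι ι ℝ} (hP : ∀ i j, |P i j| ≤ η) (hη : 0 ≤ η) (hf : |f - 1| ≤ 1 / 4)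
    (hsmall : (Fintype.card ι : ℝ) ^ 2 * η ≤ 1 / 16) {v : EuclideanSpace ℝ ι} (hv : v ≠ 0) :
    (∀ i, |unitNormal (f • 1 + P) (fun i => v i / ‖v‖) i - v i / ‖v‖ / √f| ≤
        17 * Fintype.card ι ^ 2 * η) ∧
      |∑ i, v i * ((f • 1 + P) *ᵥ unitNormal (f • 1 + P) (fun i => v i / ‖v‖)) i - √f * ‖v‖| ≤
        8 * Fintype.card ι ^ 2 * η * ‖v‖ := by
  have hr := EuclideanSpace.dotProduct_self_div_norm hv
  constructor
  · intro i
    calc _ = |(unitNormal (f • 1 + P) (fun i => v i / ‖v‖) - (√f)⁻¹ • fun i => v i / ‖v‖) i| := by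
          simp [div_eq_inv_mul, mul_comm]
      _ ≤ _ := (norm_le_pi_norm _ i).trans (norm_unitNormal_sub_le hP hη hf hsmall hr)
  · rw [EuclideanSpace.sum_mul_eq_norm_mul_dotProduct hv, mul_comm (√f), ← mul_sub, abs_mul,
      abs_norm, mul_comm _ ‖v‖]
    exact mul_le_mul_of_nonneg_left
      (abs_dotProduct_mulVec_unitNormal_sub_sqrt_le hP hη hf hsmall hr) (norm_nonneg v)

theorem unit_normal_expansion_general
    (m γ₁ γ₂ : ℝ) (a c : E3) (ε : ℝ) (hε : 0 ≤ ε)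
    (f : E3 → ℝ)
    (hf : ∀ x : E3,
      f x = 1 + 2 * m / ‖x‖ + γ₁ * (∑ i, c i * x i) / ‖x‖ ^ 3 + γ₂ / ‖x‖ ^ 2)
    (p : E3 → Matrix (Fin 3) (Fin 3) ℝ)
    (C : ℝ)
    (hp0 : ∀ x : E3, 1 < ‖x‖ → ∀ i j, |p x i j| ≤ C * ‖x‖ ^ (-2 - ε))
    (g : E3 → Matrix (Fin 3) (Fin 3) ℝ)
    (hg : ∀ x : E3, g x = f x • (1 : Matrix (Fin 3) (Fin 3) ℝ) + p x)
    (𝔯 : E3 → Fin 3 → ℝ)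
    (h𝔯 : ∀ x : E3, 𝔯 x = fun i => (x i - a i) / ‖x - a‖)
    (ν : E3 → Fin 3 → ℝ)
    (hν : ∀ x : E3, ν x = fun i =>
      ((g x)⁻¹ *ᵥ 𝔯 x) i / Real.sqrt (∑ j, 𝔯 x j * ((g x)⁻¹ *ᵥ 𝔯 x) j)) :
    ∃ C' R : ℝ, ∀ x : E3, R ≤ ‖x‖ →
      (∀ i : Fin 3,
          |ν x i - 𝔯 x i / Real.sqrt (f x)| ≤ C' * ‖x - a‖ ^ (-2 - ε)) ∧
        |(∑ i, (x i - a i) * ((g x) *ᵥ ν x) i) - Real.sqrt (f x) * ‖x - a‖| ≤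
          C' * ‖x - a‖ ^ (-1 - ε) := by
  set B := 2 * |m| + |γ₁| * ‖c‖ + |γ₂| with hB_def
  refine ⟨153 * |C| * 2 ^ (2 + ε), 2 + 2 * ‖a‖ + 4 * B + 144 * |C|, fun x hx => ?_⟩
  have hB : 0 ≤ B := by positivity
  have ha := norm_nonneg a
  have hC := abs_nonneg C
  have hx1 : 1 < ‖x‖ := by linarith
  have hρ : 0 < ‖x - a‖ := lt_of_lt_of_le (by linarith) (norm_sub_norm_le x a)
  have hf_near : |f x - 1| ≤ 1 / 4 := by
    rw [hf x]
    refine (abs_sub_one_le_div hx1.le (EuclideanSpace.abs_sum_mul_le_norm_mul_norm c x)).trans ?_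
    rw [div_le_iff₀ (by linarith), ← hB_def]; linarith
  set η := |C| * ‖x‖ ^ (-2 - ε)
  have hp_le : ∀ i j, |p x i j| ≤ η := fun i j =>
    (hp0 x hx1 i j).trans (mul_le_mul_of_nonneg_right (le_abs_self C) (by positivity))
  have hη_le : η ≤ |C| * 2 ^ (2 + ε) * ‖x - a‖ ^ (-2 - ε) := by
    rw [mul_assoc]
    refine mul_le_mul_of_nonneg_left ?_ (abs_nonneg C)
    have h := Real.rpow_le_two_rpow_mul_rpow hρ
      ((norm_sub_le x a).trans (by linarith : ‖x‖ + ‖a‖ ≤ 2 * ‖x‖)) (by linarith : -2 - ε ≤ 0)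
    rwa [neg_sub, sub_neg_eq_add, add_comm] at h
  have hsmall : (Fintype.card (Fin 3) : ℝ) ^ 2 * η ≤ 1 / 16 := by
    have hη : η ≤ |C| * ‖x‖⁻¹ :=
      mul_le_mul_of_nonneg_left (Real.rpow_le_inv_of_le_neg_one hx1.le (by linarith)) hC
    have hCx : |C| * ‖x‖⁻¹ ≤ 1 / 144 := by
      rw [← div_eq_mul_inv, div_le_iff₀ (by linarith)]; linarith
    rw [Fintype.card_fin]; push_cast; linarith
  obtain ⟨hν_le, hXν_le⟩ :=
    unitNormal_expansion_of_abs_le hp_le (by positivity) hf_near hsmall (norm_pos_iff.mp hρ)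
  have hνx : ν x = unitNormal (g x) (𝔯 x) := by
    rw [hν x]; ext i; simp [unitNormal, dotProduct, div_eq_inv_mul]
  have h𝔯x : 𝔯 x = fun i => (x - a) i / ‖x - a‖ := by simp [h𝔯 x]
  rw [hνx, h𝔯x, hg x]
  simp only [PiLp.sub_apply, Fintype.card_fin, Nat.cast_ofNat] at hν_le hXν_le ⊢
  constructor
  · exact fun i => (hν_le i).trans (by linarith)
  · have hηρ : η * ‖x - a‖ ≤ |C| * 2 ^ (2 + ε) * ‖x - a‖ ^ (-1 - ε) := by
      rw [show -1 - ε = -2 - ε + 1 by ring, Real.rpow_add_one hρ.ne', ← mul_assoc]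
      exact mul_le_mul_of_nonneg_right hη_le hρ.le
    have hpos : 0 ≤ |C| * 2 ^ (2 + ε) * ‖x - a‖ ^ (-1 - ε) := by positivity
    exact hXν_le.trans (by linarith)

/-- the outward `g`-unit normal `ν = g⁻¹𝔯/√(𝔯ᵀ g⁻¹ 𝔯)` of the Euclidean sphere
`{|y − a| = ρ}` satisfies `ν = f^{−1/2}𝔯 + O(ρ^{−2−ε})` and
`(x−a)ᵀ g ν = f^{1/2} ρ + O(ρ^{−1−ε})`, where `𝔯 = (x−a)/|x−a|` and `ρ = |x−a|`. -/
theorem unit_normal_expansion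
    (m γ₁ γ₂ : ℝ) (a c : E3) (ε : ℝ) (hε : 0 ≤ ε)
    (f : E3 → ℝ)
    (hf : ∀ x : E3,
      f x = 1 + 2 * m / ‖x‖ + γ₁ * (∑ i, c i * x i) / ‖x‖ ^ 3 + γ₂ / ‖x‖ ^ 2)
    (p : E3 → Matrix (Fin 3) (Fin 3) ℝ)
    (hpsym : ∀ x : E3, 1 < ‖x‖ → (p x).IsSymm)
    (hpC1 : ∀ i j, ContDiffOn ℝ 1 (fun x => p x i j) {x : E3 | 1 < ‖x‖})
    (C : ℝ) (hC : 0 < C)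
    (hp0 : ∀ x : E3, 1 < ‖x‖ → ∀ i j, |p x i j| ≤ C * ‖x‖ ^ (-2 - ε))
    (g : E3 → Matrix (Fin 3) (Fin 3) ℝ)
    (hg : ∀ x : E3, g x = f x • (1 : Matrix (Fin 3) (Fin 3) ℝ) + p x)
    (𝔯 : E3 → Fin 3 → ℝ)
    (h𝔯 : ∀ x : E3, 𝔯 x = fun i => (x i - a i) / ‖x - a‖)
    (ν : E3 → Fin 3 → ℝ)
    (hν : ∀ x : E3, ν x = fun i =>
      ((g x)⁻¹ *ᵥ 𝔯 x) i / Real.sqrt (∑ j, 𝔯 x j * ((g x)⁻¹ *ᵥ 𝔯 x) j)) :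
    ∃ C' R : ℝ, ∀ x : E3, R ≤ ‖x‖ →
      (∀ i : Fin 3,
          |ν x i - 𝔯 x i / Real.sqrt (f x)| ≤ C' * ‖x - a‖ ^ (-2 - ε)) ∧
        |(∑ i, (x i - a i) * ((g x) *ᵥ ν x) i) - Real.sqrt (f x) * ‖x - a‖| ≤
          C' * ‖x - a‖ ^ (-1 - ε) :=
  unit_normal_expansion_general m γ₁ γ₂ a c ε hε f hf p C hp0 g hg 𝔯 h𝔯 ν hν
end
end

section
/- The tangential part (with respect to g) of the radial field X(x) = x − a along the Euclidean sphere {y : |y−a| = ρ} decays: X^⊤(x) := (x−a) − ((x−a)ᵀ g(x) ν(x)) ν(x) satisfies |X^⊤(x)| ≤ C' |x|^{−1−ε} for all large |x| and some constant C', where ν(x) = g(x)⁻¹𝔯 / √(𝔯ᵀ g(x)⁻¹ 𝔯) and 𝔯 = (x−a)/|x−a|. -/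
open Real Matrix

noncomputable section

/-!
Far out, `g = f • 1 + p` with `f ≥ 1/2` and `p` of operator norm `δ = O(|x|^{-2-ε})`. With
`u = g⁻¹ 𝔯` one has `f u + p u = 𝔯`, `ν = u / √(𝔯 ⬝ u)` and `g ν = 𝔯 / √(𝔯 ⬝ u)`, so
`X^⊤ = |x - a| (𝔯 - u / (𝔯 ⬝ u))`. In
`𝔯 - u / (𝔯 ⬝ u) = (p u - (𝔯 ⬝ p u) 𝔯) / (1 - 𝔯 ⬝ p u)` the factor `f` has dropped out, so this
vector is `O(δ)`, and multiplying by `|x - a| = O(|x|)` gives the decay `|x|^{-1-ε}`.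
-/

open scoped InnerProductSpace

section InnerProduct

variable {E : Type*} [NormedAddCommGroup E] [InnerProductSpace ℝ E] {r u w : E} {f δ : ℝ}

lemma inner_eq_of_smul_add_eq (hr : ‖r‖ = 1) (h : f • u + w = r) :
    f * ⟪r, u⟫_ℝ = 1 - ⟪r, w⟫_ℝ := by
  have := congrArg (⟪r, ·⟫_ℝ) h
  simp only [inner_add_right, real_inner_smul_right, real_inner_self_eq_norm_sq, hr] at this
  linarith

lemma inner_pos_of_smul_add_eq (hr : ‖r‖ = 1) (h : f • u + w = r) (hf : 0 < f)
    (hw : ‖w‖ < 1) : 0 < ⟪r, u⟫_ℝ := by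
  have hrw : ⟪r, w⟫_ℝ < 1 := by
    simpa [hr] using (real_inner_le_norm r w).trans_lt (by rw [hr, one_mul]; exact hw)
  exact pos_of_mul_pos_right (inner_eq_of_smul_add_eq hr h ▸ sub_pos.2 hrw) hf.le

lemma norm_le_of_smul_add_eq (hr : ‖r‖ = 1) (h : f • u + w = r) (hw : ‖w‖ ≤ δ * ‖u‖)
    (hδ : 0 ≤ δ) (hδf : δ < f) : ‖w‖ ≤ δ / (f - δ) := by
  have hu : f * ‖u‖ ≤ 1 + δ * ‖u‖ := by
    calc f * ‖u‖ = ‖r - w‖ := by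
          rw [← h, add_sub_cancel_right, norm_smul, Real.norm_of_nonneg (by linarith)]
      _ ≤ 1 + δ * ‖u‖ := by linarith [norm_sub_le r w]
  rw [le_div_iff₀ (by linarith)]
  nlinarith [norm_nonneg u]

lemma norm_sub_inv_inner_smul_le (hr : ‖r‖ = 1) (h : f • u + w = r) (hf : f ≠ 0)
    (hw : ‖w‖ < 1) : ‖r - (⟪r, u⟫_ℝ)⁻¹ • u‖ ≤ 2 * ‖w‖ / (1 - ‖w‖) := by
  set d := ⟪r, w⟫_ℝ
  have hd : |d| ≤ ‖w‖ := by simpa [hr] using abs_real_inner_le_norm r w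
  have hd1 : 0 < 1 - d := by linarith [le_abs_self d]
  have hu : u = f⁻¹ • (r - w) := by rw [← h, add_sub_cancel_right, inv_smul_smul₀ hf]
  have hs : ⟪r, u⟫_ℝ = (1 - d) / f := by
    rw [eq_div_iff hf, mul_comm, inner_eq_of_smul_add_eq hr h]
  have key : r - (⟪r, u⟫_ℝ)⁻¹ • u = (1 - d)⁻¹ • (w - d • r) := by
    rw [hs, hu, smul_smul, inv_div, div_mul_eq_mul_div, mul_inv_cancel₀ hf]
    match_scalars
    · field_simp
      ring
    · field_simp
  calc ‖r - (⟪r, u⟫_ℝ)⁻¹ • u‖ ≤ (1 - d)⁻¹ * (‖w‖ + |d|) := by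
        rw [key, norm_smul, Real.norm_of_nonneg (inv_pos.2 hd1).le]
        gcongr
        simpa [norm_smul, hr] using norm_sub_le w (d • r)
    _ ≤ 2 * ‖w‖ / (1 - ‖w‖) := by
        rw [inv_mul_eq_div]
        gcongr <;> linarith [le_abs_self d, neg_abs_le d]

lemma abs_conformalFactor_sub_one_le (m γ₁ γ₂ : ℝ) (c : E) {x : E} (hx : 1 ≤ ‖x‖) :
    |1 + 2 * m / ‖x‖ + γ₁ * ⟪c, x⟫_ℝ / ‖x‖ ^ 3 + γ₂ / ‖x‖ ^ 2 - 1| ≤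
      (2 * |m| + |γ₁| * ‖c‖ + |γ₂|) / ‖x‖ := by
  have hx0 : 0 < ‖x‖ := by linarith
  have hx2 : ‖x‖ ≤ ‖x‖ ^ 2 := le_self_pow₀ hx two_ne_zero
  calc _ = |2 * m / ‖x‖ + γ₁ * ⟪c, x⟫_ℝ / ‖x‖ ^ 3 + γ₂ / ‖x‖ ^ 2| := by ring_nf
    _ ≤ |2 * m / ‖x‖| + |γ₁ * ⟪c, x⟫_ℝ / ‖x‖ ^ 3| + |γ₂ / ‖x‖ ^ 2| := abs_add_three _ _ _
    _ ≤ 2 * |m| / ‖x‖ + |γ₁| * (‖c‖ * ‖x‖) / ‖x‖ ^ 3 + |γ₂| / ‖x‖ ^ 2 := by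
        simp only [abs_div, abs_mul, abs_two, abs_pow, abs_of_pos hx0]
        gcongr
        exact abs_real_inner_le_norm c x
    _ = 2 * |m| / ‖x‖ + |γ₁| * ‖c‖ / ‖x‖ ^ 2 + |γ₂| / ‖x‖ ^ 2 := by field_simp
    _ ≤ 2 * |m| / ‖x‖ + |γ₁| * ‖c‖ / ‖x‖ + |γ₂| / ‖x‖ := by gcongr
    _ = (2 * |m| + |γ₁| * ‖c‖ + |γ₂|) / ‖x‖ := by ring

lemma one_half_le_conformalFactor (m γ₁ γ₂ : ℝ) (c : E) {x : E} (hx₁ : 1 ≤ ‖x‖)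
    (hx : 2 * (2 * |m| + |γ₁| * ‖c‖ + |γ₂|) ≤ ‖x‖) :
    1 / 2 ≤ 1 + 2 * m / ‖x‖ + γ₁ * ⟪c, x⟫_ℝ / ‖x‖ ^ 3 + γ₂ / ‖x‖ ^ 2 := by
  have hB : (2 * |m| + |γ₁| * ‖c‖ + |γ₂|) / ‖x‖ ≤ 1 / 2 := by
    rw [div_le_iff₀ (by linarith)]
    linarith
  linarith [neg_abs_le (1 + 2 * m / ‖x‖ + γ₁ * ⟪c, x⟫_ℝ / ‖x‖ ^ 3 + γ₂ / ‖x‖ ^ 2 - 1),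
    abs_conformalFactor_sub_one_le m γ₁ γ₂ c hx₁]

end InnerProduct

section Matrix

variable {m n : Type*} [Fintype m] [Fintype n]

lemma norm_toLp_mulVec_le_of_abs_le {A : Matrix m n ℝ} {η : ℝ} (hη : 0 ≤ η)
    (hA : ∀ i j, |A i j| ≤ η) (v : n → ℝ) :
    ‖WithLp.toLp 2 (A *ᵥ v)‖ ≤
      √(Fintype.card m * Fintype.card n) * η * ‖WithLp.toLp 2 v‖ := by
  have hrow : ∀ i, (A *ᵥ v) i ^ 2 ≤ Fintype.card n * η ^ 2 * ‖WithLp.toLp 2 v‖ ^ 2 := by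
    intro i
    calc (A *ᵥ v) i ^ 2 ≤ (∑ j, A i j ^ 2) * ∑ j, v j ^ 2 :=
          Finset.sum_mul_sq_le_sq_mul_sq _ _ _
      _ ≤ (∑ _j : n, η ^ 2) * ∑ j, v j ^ 2 := by
          gcongr ?_ * _
          exact Finset.sum_le_sum fun j _ ↦ sq_le_sq.2 ((hA i j).trans_eq (abs_of_nonneg hη).symm)
      _ = Fintype.card n * η ^ 2 * ‖WithLp.toLp 2 v‖ ^ 2 := by
          simp [EuclideanSpace.real_norm_sq_eq]
  rw [← sq_le_sq₀ (norm_nonneg _) (by positivity), EuclideanSpace.real_norm_sq_eq]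
  calc ∑ i, (A *ᵥ v) i ^ 2 ≤ ∑ _i : m, Fintype.card n * η ^ 2 * ‖WithLp.toLp 2 v‖ ^ 2 :=
        Finset.sum_le_sum fun i _ ↦ hrow i
    _ = _ := by
        rw [mul_pow, mul_pow, sq_sqrt (by positivity)]
        simp [mul_assoc]

lemma sub_dotProduct_mulVec_smul_eq (G : Matrix n n ℝ) {r u : n → ℝ} (hu : G *ᵥ u = r)
    (hr : r ⬝ᵥ r = 1) (hs : 0 ≤ r ⬝ᵥ u) :
    r - (r ⬝ᵥ (G *ᵥ ((√(r ⬝ᵥ u))⁻¹ • u))) • ((√(r ⬝ᵥ u))⁻¹ • u) = r - (r ⬝ᵥ u)⁻¹ • u := by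
  rw [mulVec_smul, hu, dotProduct_smul, hr, smul_smul, smul_eq_mul, mul_one, ← mul_inv,
    mul_self_sqrt hs]

variable [DecidableEq n]

lemma isUnit_smul_one_add_of_norm_mulVec_le {P : Matrix n n ℝ} {f δ : ℝ}
    (hP : ∀ v, ‖WithLp.toLp 2 (P *ᵥ v)‖ ≤ δ * ‖WithLp.toLp 2 v‖) (hδf : δ < f) :
    IsUnit (f • 1 + P) := by
  refine mulVec_injective_iff_isUnit.1 ((injective_iff_map_eq_zero (mulVecLin (f • 1 + P))).2 ?_)
  intro v hv
  have hfv : f • v = -(P *ᵥ v) := by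
    rw [mulVecLin_apply, add_mulVec, smul_mulVec, one_mulVec] at hv
    exact eq_neg_of_add_eq_zero_left hv
  have : f * ‖WithLp.toLp 2 v‖ ≤ δ * ‖WithLp.toLp 2 v‖ := by
    calc f * ‖WithLp.toLp 2 v‖ ≤ ‖WithLp.toLp 2 (f • v)‖ := by
          rw [WithLp.toLp_smul, norm_smul, Real.norm_eq_abs]
          exact mul_le_mul_of_nonneg_right (le_abs_self f) (norm_nonneg _)
      _ ≤ δ * ‖WithLp.toLp 2 v‖ := by rw [hfv, WithLp.toLp_neg, norm_neg]; exact hP v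
  have : ‖WithLp.toLp 2 v‖ = 0 := by nlinarith [norm_nonneg (WithLp.toLp 2 v)]
  simpa using this

lemma norm_toLp_sub_dotProduct_mulVec_smul_le {G P : Matrix n n ℝ} {f δ : ℝ} {r ν : n → ℝ}
    (hG : G = f • 1 + P) (hP : ∀ v, ‖WithLp.toLp 2 (P *ᵥ v)‖ ≤ δ * ‖WithLp.toLp 2 v‖)
    (hδ : 0 ≤ δ) (hf : 0 < f) (hδf : 3 * δ ≤ f) (hr : ‖WithLp.toLp 2 r‖ = 1)
    (hν : ν = (√(r ⬝ᵥ (G⁻¹ *ᵥ r)))⁻¹ • (G⁻¹ *ᵥ r)) :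
    ‖WithLp.toLp 2 (r - (r ⬝ᵥ (G *ᵥ ν)) • ν)‖ ≤ 6 * δ / f := by
  set u := G⁻¹ *ᵥ r
  have hGu : G *ᵥ u = r := by
    have hG_unit : IsUnit G := hG ▸ isUnit_smul_one_add_of_norm_mulVec_le hP (by linarith)
    rw [mulVec_mulVec, mul_nonsing_inv _ ((isUnit_iff_isUnit_det G).1 hG_unit), one_mulVec]
  have hfu : f • WithLp.toLp 2 u + WithLp.toLp 2 (P *ᵥ u) = WithLp.toLp 2 r := by
    rw [← WithLp.toLp_smul, ← WithLp.toLp_add, ← hGu, hG, add_mulVec, smul_mulVec, one_mulVec]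
  have hw : ‖WithLp.toLp 2 (P *ᵥ u)‖ ≤ δ / (f - δ) :=
    norm_le_of_smul_add_eq hr hfu (hP u) hδ (by linarith)
  have hδ' : δ / (f - δ) ≤ 3 * δ / (2 * f) := by
    rw [div_le_div_iff₀ (by linarith) (by linarith)]
    nlinarith
  have hw_half : ‖WithLp.toLp 2 (P *ᵥ u)‖ ≤ 1 / 2 := by
    refine hw.trans (hδ'.trans ?_)
    rw [div_le_div_iff₀ (by linarith) (by norm_num)]
    linarith
  have hinner : ⟪WithLp.toLp 2 r, WithLp.toLp 2 u⟫_ℝ = r ⬝ᵥ u := by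
    simp [EuclideanSpace.inner_toLp_toLp, dotProduct_comm]
  have hs : 0 < r ⬝ᵥ u := hinner ▸ inner_pos_of_smul_add_eq hr hfu hf (by linarith)
  have hrr : r ⬝ᵥ r = 1 := by
    have := real_inner_self_eq_norm_sq (WithLp.toLp 2 r)
    rwa [EuclideanSpace.inner_toLp_toLp, star_trivial, hr, one_pow] at this
  rw [hν, sub_dotProduct_mulVec_smul_eq G hGu hrr hs.le, WithLp.toLp_sub, WithLp.toLp_smul,
    ← hinner]
  calc _ ≤ 2 * ‖WithLp.toLp 2 (P *ᵥ u)‖ / (1 - ‖WithLp.toLp 2 (P *ᵥ u)‖) :=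
        norm_sub_inv_inner_smul_le hr hfu hf.ne' (by linarith)
    _ ≤ 4 * ‖WithLp.toLp 2 (P *ᵥ u)‖ := by
        rw [div_le_iff₀ (by linarith)]
        nlinarith [norm_nonneg (WithLp.toLp 2 (P *ᵥ u))]
    _ ≤ 6 * δ / f := by
        have : 4 * (3 * δ / (2 * f)) = 6 * δ / f := by field_simp; ring
        linarith

lemma norm_toLp_tangential_radial_le {G P : Matrix n n ℝ} {f δ : ℝ} {r ν : n → ℝ}
    {x a : EuclideanSpace ℝ n} (hG : G = f • 1 + P)
    (hP : ∀ v, ‖WithLp.toLp 2 (P *ᵥ v)‖ ≤ δ * ‖WithLp.toLp 2 v‖)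
    (hδ : 0 ≤ δ) (hf : 0 < f) (hδf : 3 * δ ≤ f) (hxa : x ≠ a)
    (hr : r = WithLp.ofLp (‖x - a‖⁻¹ • (x - a)))
    (hν : ν = (√(r ⬝ᵥ (G⁻¹ *ᵥ r)))⁻¹ • (G⁻¹ *ᵥ r)) :
    ‖WithLp.toLp 2 (WithLp.ofLp (x - a) - (WithLp.ofLp (x - a) ⬝ᵥ (G *ᵥ ν)) • ν)‖ ≤
      ‖x - a‖ * (6 * δ / f) := by
  have hxa' : ‖x - a‖ ≠ 0 := norm_ne_zero_iff.2 (sub_ne_zero.2 hxa)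
  have hr₁ : ‖WithLp.toLp 2 r‖ = 1 := by
    rw [hr, WithLp.toLp_ofLp, norm_smul, norm_inv, norm_norm, inv_mul_cancel₀ hxa']
  have hX : WithLp.ofLp (x - a) = ‖x - a‖ • r := by
    rw [hr, WithLp.ofLp_smul, smul_inv_smul₀ hxa']
  rw [hX, smul_dotProduct, smul_eq_mul, ← smul_smul, ← smul_sub, WithLp.toLp_smul, norm_smul,
    norm_norm]
  exact mul_le_mul_of_nonneg_left
    (norm_toLp_sub_dotProduct_mulVec_smul_le hG hP hδ hf hδf hr₁ hν) (norm_nonneg _)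

end Matrix

theorem tangential_radial_field_decay_general
    (m γ₁ γ₂ : ℝ) (a c : E3) (ε : ℝ) (hε : 0 ≤ ε)
    (f : E3 → ℝ)
    (hf : ∀ x : E3,
      f x = 1 + 2 * m / ‖x‖ + γ₁ * (∑ i, c i * x i) / ‖x‖ ^ 3 + γ₂ / ‖x‖ ^ 2)
    (p : E3 → Matrix (Fin 3) (Fin 3) ℝ)
    (C : ℝ) (hC : 0 < C)
    (hp0 : ∀ x : E3, 1 < ‖x‖ → ∀ i j, |p x i j| ≤ C * ‖x‖ ^ (-2 - ε))
    (g : E3 → Matrix (Fin 3) (Fin 3) ℝ)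
    (hg : ∀ x : E3, g x = f x • (1 : Matrix (Fin 3) (Fin 3) ℝ) + p x)
    (𝔯 : E3 → Fin 3 → ℝ)
    (h𝔯 : ∀ x : E3, 𝔯 x = fun i => (x i - a i) / ‖x - a‖)
    (ν : E3 → Fin 3 → ℝ)
    (hν : ∀ x : E3, ν x = fun i =>
      ((g x)⁻¹ *ᵥ 𝔯 x) i / Real.sqrt (∑ j, 𝔯 x j * ((g x)⁻¹ *ᵥ 𝔯 x) j))
    (Xt : E3 → Fin 3 → ℝ)
    (hXt : ∀ x : E3, Xt x = fun i =>
      (x i - a i) - (∑ j, (x j - a j) * ((g x) *ᵥ ν x) j) * ν x i) :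
    ∃ C' R : ℝ, ∀ x : E3, R ≤ ‖x‖ →
      Real.sqrt (∑ i, (Xt x i) ^ 2) ≤ C' * ‖x‖ ^ (-1 - ε) := by
  set B := 2 * |m| + |γ₁| * ‖c‖ + |γ₂|
  have hB : 0 ≤ B := by positivity
  refine ⟨72 * C, 2 + 2 * B + 18 * C + ‖a‖, fun x hx ↦ ?_⟩
  have hx₁ : 1 < ‖x‖ := by linarith [norm_nonneg a]
  have hf_half : 1 / 2 ≤ f x := by
    have hinner : ∑ i, c i * x i = ⟪c, x⟫_ℝ := by
      simp [EuclideanSpace.inner_eq_star_dotProduct, dotProduct, mul_comm]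
    rw [hf x, hinner]
    exact one_half_le_conformalFactor m γ₁ γ₂ c hx₁.le (by linarith [norm_nonneg a])
  set δ := 3 * C * ‖x‖ ^ (-2 - ε)
  have hδ : 0 ≤ δ := by positivity
  have hδf : 3 * δ ≤ f x := by
    have hdecay : ‖x‖ ^ (-2 - ε) ≤ ‖x‖⁻¹ := by
      rw [← Real.rpow_neg_one]; exact Real.rpow_le_rpow_of_exponent_le hx₁.le (by linarith)
    have : 9 * C * ‖x‖⁻¹ ≤ 1 / 2 := by
      rw [mul_inv_le_iff₀ (by linarith)]; linarith [norm_nonneg a]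
    nlinarith
  have hP : ∀ v, ‖WithLp.toLp 2 (p x *ᵥ v)‖ ≤ δ * ‖WithLp.toLp 2 v‖ := fun v ↦ by
    have := norm_toLp_mulVec_le_of_abs_le (by positivity) (hp0 x hx₁) v
    rwa [Fintype.card_fin, Real.sqrt_mul_self (by norm_num), ← mul_assoc] at this
  have hxa : x ≠ a := by rintro rfl; linarith
  have htangent := norm_toLp_tangential_radial_le (r := 𝔯 x) (ν := ν x) (hg x) hP hδ
    (by linarith) hδf hxa (by funext i; simp [h𝔯, div_eq_inv_mul])
    (by funext i; simp [hν, dotProduct, div_eq_inv_mul])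
  calc √(∑ i, Xt x i ^ 2) = ‖WithLp.toLp 2 (Xt x)‖ := by simp [EuclideanSpace.norm_eq]
    _ ≤ ‖x - a‖ * (6 * δ / f x) := hXt x ▸ htangent
    _ ≤ (2 * ‖x‖) * (12 * δ) := by
        gcongr
        · linarith [norm_sub_le x a]
        · rw [div_le_iff₀ (by linarith)]; nlinarith
    _ = 72 * C * ‖x‖ ^ (-1 - ε) := by
        rw [show -1 - ε = -2 - ε + 1 by ring, Real.rpow_add_one (by linarith)]
        ring

/-- the tangential (with respect to `g`) part
`X^⊤ = (x−a) − ((x−a)ᵀ g ν) ν` of the radial field `X = x − a` along the Euclidean sphere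
`{|y − a| = ρ}` satisfies `|X^⊤(x)| ≤ C' |x|^{−1−ε}` for all large `|x|`. -/
theorem tangential_radial_field_decay
    (m γ₁ γ₂ : ℝ) (a c : E3) (ε : ℝ) (hε : 0 ≤ ε)
    (f : E3 → ℝ)
    (hf : ∀ x : E3,
      f x = 1 + 2 * m / ‖x‖ + γ₁ * (∑ i, c i * x i) / ‖x‖ ^ 3 + γ₂ / ‖x‖ ^ 2)
    (p : E3 → Matrix (Fin 3) (Fin 3) ℝ)
    (hpsym : ∀ x : E3, 1 < ‖x‖ → (p x).IsSymm)
    (hpC1 : ∀ i j, ContDiffOn ℝ 1 (fun x => p x i j) {x : E3 | 1 < ‖x‖})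
    (C : ℝ) (hC : 0 < C)
    (hp0 : ∀ x : E3, 1 < ‖x‖ → ∀ i j, |p x i j| ≤ C * ‖x‖ ^ (-2 - ε))
    (g : E3 → Matrix (Fin 3) (Fin 3) ℝ)
    (hg : ∀ x : E3, g x = f x • (1 : Matrix (Fin 3) (Fin 3) ℝ) + p x)
    (𝔯 : E3 → Fin 3 → ℝ)
    (h𝔯 : ∀ x : E3, 𝔯 x = fun i => (x i - a i) / ‖x - a‖)
    (ν : E3 → Fin 3 → ℝ)
    (hν : ∀ x : E3, ν x = fun i =>
      ((g x)⁻¹ *ᵥ 𝔯 x) i / Real.sqrt (∑ j, 𝔯 x j * ((g x)⁻¹ *ᵥ 𝔯 x) j))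
    (Xt : E3 → Fin 3 → ℝ)
    (hXt : ∀ x : E3, Xt x = fun i =>
      (x i - a i) - (∑ j, (x j - a j) * ((g x) *ᵥ ν x) j) * ν x i) :
    ∃ C' R : ℝ, ∀ x : E3, R ≤ ‖x‖ →
      Real.sqrt (∑ i, (Xt x i) ^ 2) ≤ C' * ‖x‖ ^ (-1 - ε) :=
  tangential_radial_field_decay_general m γ₁ γ₂ a c ε hε f hf p C hC hp0 g hg 𝔯 h𝔯 ν hν Xt hXt
end
end
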